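/- arXiv:math/0508516 — 2 statements merged into one kernel-verified Lean document; each statement's English description precedes it below -/
import Mathlib

section
/- Let ε > 0, a ∈ 𝒮(ℝ), and u : ℝ → ℂ infinitely differentiable with support a compact subset of (0,ε). Then for every x ∈ (0,ε), the iterated integrals below converge absolutely and ∫_ℝ (∫_0^ε e^{i(1/y - 1/x)ξ} a(ξ) u(y) y^{-2} dy) dξ = ∫_ℝ (∫_0^ε e^{i(x-y)ξ} a(x y ξ) (x/y) u(y) dy) dξ. -/
open MeasureTheory

set_option maxHeartbeats 2000000 in
/-- The change-of-variables identity (substituting `ξ ↦ xyξ`) relating the cusp quantization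
with phase `(1/y - 1/x)ξ` to a standard quantization with phase `(x - y)ξ`: both iterated
integrals converge absolutely and agree, for `a ∈ 𝒮(ℝ)` and `u ∈ C_c^∞((0,ε))`. -/
theorem cusp_quantization_change_of_variables (ε : ℝ) (hε : 0 < ε)
    (a : SchwartzMap ℝ ℂ) (u : ℝ → ℂ) (hu : ContDiff ℝ (⊤ : ℕ∞) u)
    (hcomp : IsCompact (tsupport u)) (hsupp : tsupport u ⊆ Set.Ioo (0 : ℝ) ε) :
    ∀ x ∈ Set.Ioo (0 : ℝ) ε,
      (∀ ξ : ℝ, IntegrableOn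
          (fun y : ℝ => Complex.exp (Complex.I * ((1 / y - 1 / x : ℝ) : ℂ) * (ξ : ℂ))
            * a ξ * u y / ((y : ℂ) ^ 2)) (Set.Ioo (0 : ℝ) ε)) ∧
      Integrable (fun ξ : ℝ => ∫ y in Set.Ioo (0 : ℝ) ε,
          ‖Complex.exp (Complex.I * ((1 / y - 1 / x : ℝ) : ℂ) * (ξ : ℂ))
            * a ξ * u y / ((y : ℂ) ^ 2)‖) ∧
      (∀ ξ : ℝ, IntegrableOn
          (fun y : ℝ => Complex.exp (Complex.I * ((x - y : ℝ) : ℂ) * (ξ : ℂ))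
            * a (x * y * ξ) * ((x / y : ℝ) : ℂ) * u y) (Set.Ioo (0 : ℝ) ε)) ∧
      Integrable (fun ξ : ℝ => ∫ y in Set.Ioo (0 : ℝ) ε,
          ‖Complex.exp (Complex.I * ((x - y : ℝ) : ℂ) * (ξ : ℂ))
            * a (x * y * ξ) * ((x / y : ℝ) : ℂ) * u y‖) ∧
      (∫ ξ : ℝ, ∫ y in Set.Ioo (0 : ℝ) ε,
          Complex.exp (Complex.I * ((1 / y - 1 / x : ℝ) : ℂ) * (ξ : ℂ))
            * a ξ * u y / ((y : ℂ) ^ 2))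
        = ∫ ξ : ℝ, ∫ y in Set.Ioo (0 : ℝ) ε,
            Complex.exp (Complex.I * ((x - y : ℝ) : ℂ) * (ξ : ℂ))
              * a (x * y * ξ) * ((x / y : ℝ) : ℂ) * u y := by
  intro x hx
  obtain ⟨hx0, hxε⟩ := hx
  have hUc : Continuous u := hu.continuous
  -- lower bound on the support
  obtain ⟨δ, hδ0, hδ⟩ : ∃ δ > (0:ℝ), ∀ y ∈ tsupport u, δ ≤ y := by
    rcases (tsupport u).eq_empty_or_nonempty with h | h
    · exact ⟨1, one_pos, by simp [h]⟩
    · obtain ⟨y₀, hy₀, hmin⟩ := hcomp.exists_isMinOn h continuous_id.continuousOn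
      exact ⟨y₀, (hsupp hy₀).1, fun y hy => hmin hy⟩
  -- joint continuity of the two integrands
  have hFc : Continuous (fun p : ℝ × ℝ =>
      Complex.exp (Complex.I * ((1 / p.2 - 1 / x : ℝ) : ℂ) * (p.1 : ℂ))
        * a p.1 * u p.2 / ((p.2 : ℂ) ^ 2)) := by
    rw [continuous_iff_continuousAt]
    intro p
    by_cases hy : p.2 ∈ tsupport u
    · have hy0 : p.2 ≠ 0 := ne_of_gt (hsupp hy).1
      have h2 : ContinuousAt (fun q : ℝ × ℝ => (1 / q.2 - 1 / x : ℝ)) p :=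
        ((continuousAt_const.div continuous_snd.continuousAt hy0).sub continuousAt_const)
      have hexp : ContinuousAt (fun q : ℝ × ℝ =>
          Complex.exp (Complex.I * ((1 / q.2 - 1 / x : ℝ) : ℂ) * (q.1 : ℂ))) p := by
        apply ContinuousAt.cexp
        exact (continuousAt_const.mul (Complex.continuous_ofReal.continuousAt.comp h2)).mul
          (Complex.continuous_ofReal.continuousAt.comp continuous_fst.continuousAt)
      refine ContinuousAt.div ?_ ?_ ?_
      · exact (hexp.mul (a.continuous.continuousAt.comp continuous_fst.continuousAt)).mul
          (hUc.continuousAt.comp continuous_snd.continuousAt)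
      · exact ((Complex.continuous_ofReal.comp continuous_snd).pow 2).continuousAt
      · exact pow_ne_zero 2 (Complex.ofReal_ne_zero.mpr hy0)
    · have hz : (fun q : ℝ × ℝ => Complex.exp (Complex.I * ((1 / q.2 - 1 / x : ℝ) : ℂ) * (q.1 : ℂ))
          * a q.1 * u q.2 / ((q.2 : ℂ) ^ 2)) =ᶠ[nhds p] (fun _ => 0) := by
        filter_upwards [continuous_snd.continuousAt.preimage_mem_nhds
          ((isClosed_tsupport u).isOpen_compl.mem_nhds hy)] with q hq
        simp [image_eq_zero_of_notMem_tsupport hq]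
      exact continuousAt_const.congr hz.symm
  have hGc : Continuous (fun p : ℝ × ℝ =>
      Complex.exp (Complex.I * ((x - p.2 : ℝ) : ℂ) * (p.1 : ℂ))
        * a (x * p.2 * p.1) * ((x / p.2 : ℝ) : ℂ) * u p.2) := by
    rw [continuous_iff_continuousAt]
    intro p
    by_cases hy : p.2 ∈ tsupport u
    · have hy0 : p.2 ≠ 0 := ne_of_gt (hsupp hy).1
      have hexp : Continuous (fun q : ℝ × ℝ =>
          Complex.exp (Complex.I * ((x - q.2 : ℝ) : ℂ) * (q.1 : ℂ))) := by
        apply Complex.continuous_exp.comp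
        exact (continuous_const.mul (Complex.continuous_ofReal.comp
          (continuous_const.sub continuous_snd))).mul
          (Complex.continuous_ofReal.comp continuous_fst)
      have ha : Continuous (fun q : ℝ × ℝ => a (x * q.2 * q.1)) :=
        a.continuous.comp ((continuous_const.mul continuous_snd).mul continuous_fst)
      refine ((ContinuousAt.mul ?_ ?_).mul (hUc.continuousAt.comp continuous_snd.continuousAt))
      · exact (hexp.continuousAt).mul ha.continuousAt
      · exact Complex.continuous_ofReal.continuousAt.comp
          (continuousAt_const.div continuous_snd.continuousAt hy0)
    · have hz : (fun q : ℝ × ℝ => Complex.exp (Complex.I * ((x - q.2 : ℝ) : ℂ) * (q.1 : ℂ))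
          * a (x * q.2 * q.1) * ((x / q.2 : ℝ) : ℂ) * u q.2) =ᶠ[nhds p] (fun _ => 0) := by
        filter_upwards [continuous_snd.continuousAt.preimage_mem_nhds
          ((isClosed_tsupport u).isOpen_compl.mem_nhds hy)] with q hq
        simp [image_eq_zero_of_notMem_tsupport hq]
      exact continuousAt_const.congr hz.symm
  -- part (i)
  have part1 : ∀ ξ : ℝ, IntegrableOn
      (fun y : ℝ => Complex.exp (Complex.I * ((1 / y - 1 / x : ℝ) : ℂ) * (ξ : ℂ))
        * a ξ * u y / ((y : ℂ) ^ 2)) (Set.Ioo (0 : ℝ) ε) := by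
    intro ξ
    have hc : Continuous (fun y : ℝ => Complex.exp (Complex.I * ((1 / y - 1 / x : ℝ) : ℂ) * (ξ : ℂ))
        * a ξ * u y / ((y : ℂ) ^ 2)) := by
      have h := hFc.comp (Continuous.prodMk_right ξ)
      simpa [Function.comp_def] using h
    exact (hc.integrableOn_Icc (a := 0) (b := ε)).mono_set Set.Ioo_subset_Icc_self
  -- norm identity for F
  have hnormF : ∀ ξ y : ℝ,
      ‖Complex.exp (Complex.I * ((1 / y - 1 / x : ℝ) : ℂ) * (ξ : ℂ)) * a ξ * u y / ((y : ℂ) ^ 2)‖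
        = ‖a ξ‖ * (‖u y‖ / y ^ 2) := by
    intro ξ y
    rw [norm_div, norm_mul, norm_mul, Complex.norm_exp]
    simp [Complex.mul_re]
    ring
  -- part (ii)
  have part2 : Integrable (fun ξ : ℝ => ∫ y in Set.Ioo (0 : ℝ) ε,
      ‖Complex.exp (Complex.I * ((1 / y - 1 / x : ℝ) : ℂ) * (ξ : ℂ))
        * a ξ * u y / ((y : ℂ) ^ 2)‖) := by
    have heq : (fun ξ : ℝ => ∫ y in Set.Ioo (0 : ℝ) ε,
        ‖Complex.exp (Complex.I * ((1 / y - 1 / x : ℝ) : ℂ) * (ξ : ℂ))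
          * a ξ * u y / ((y : ℂ) ^ 2)‖)
        = fun ξ : ℝ => ‖a ξ‖ * ∫ y in Set.Ioo (0 : ℝ) ε, ‖u y‖ / y ^ 2 := by
      funext ξ
      simp_rw [hnormF ξ]
      rw [integral_const_mul]
    rw [heq]
    exact (a.integrable.norm).mul_const _
  -- part (iii)
  have part3 : ∀ ξ : ℝ, IntegrableOn
      (fun y : ℝ => Complex.exp (Complex.I * ((x - y : ℝ) : ℂ) * (ξ : ℂ))
        * a (x * y * ξ) * ((x / y : ℝ) : ℂ) * u y) (Set.Ioo (0 : ℝ) ε) := by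
    intro ξ
    have hc : Continuous (fun y : ℝ => Complex.exp (Complex.I * ((x - y : ℝ) : ℂ) * (ξ : ℂ))
        * a (x * y * ξ) * ((x / y : ℝ) : ℂ) * u y) := by
      have h := hGc.comp (Continuous.prodMk_right ξ)
      simpa [Function.comp_def] using h
    exact (hc.integrableOn_Icc (a := 0) (b := ε)).mono_set Set.Ioo_subset_Icc_self
  -- norm identity for G
  have hnormG : ∀ ξ y : ℝ,
      ‖Complex.exp (Complex.I * ((x - y : ℝ) : ℂ) * (ξ : ℂ))
        * a (x * y * ξ) * ((x / y : ℝ) : ℂ) * u y‖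
        = ‖a (x * y * ξ)‖ * |x / y| * ‖u y‖ := by
    intro ξ y
    rw [norm_mul, norm_mul, norm_mul, Complex.norm_exp]
    simp [Complex.mul_re, abs_div]
  -- Schwartz decay bound
  obtain ⟨C₀, hC₀pos, hC₀⟩ := a.decay 0 0
  obtain ⟨C₂, hC₂pos, hC₂⟩ := a.decay 2 0
  have habound : ∀ t : ℝ, ‖a t‖ ≤ (C₀ + C₂) / (1 + t ^ 2) := by
    intro t
    rw [le_div_iff₀ (by positivity)]
    have h0 := hC₀ t
    have h2 := hC₂ t
    simp only [pow_zero, one_mul, norm_iteratedFDeriv_zero, Real.norm_eq_abs] at h0 h2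
    rw [sq_abs] at h2
    nlinarith [norm_nonneg (a t)]
  -- uniform bound on the inner integral of ‖G‖
  have hUint : Integrable u := hUc.integrable_of_hasCompactSupport hcomp
  set M : ℝ := (x / δ) * ∫ y in Set.Ioo (0 : ℝ) ε, ‖u y‖ with hM
  have hptG : ∀ ξ : ℝ, ∀ y ∈ Set.Ioo (0:ℝ) ε,
      ‖Complex.exp (Complex.I * ((x - y : ℝ) : ℂ) * (ξ : ℂ))
        * a (x * y * ξ) * ((x / y : ℝ) : ℂ) * u y‖
        ≤ (C₀ + C₂) / (1 + (x * δ * ξ) ^ 2) * ((x / δ) * ‖u y‖) := by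
    intro ξ y hy
    rw [hnormG]
    by_cases hys : y ∈ tsupport u
    · have hyδ : δ ≤ y := hδ y hys
      have hy0 : 0 < y := hy.1
      have h1 : ‖a (x * y * ξ)‖ ≤ (C₀ + C₂) / (1 + (x * δ * ξ) ^ 2) := by
        refine (habound _).trans ?_
        apply div_le_div_of_nonneg_left (by positivity) (by positivity)
        have hδy : δ ^ 2 ≤ y ^ 2 := by nlinarith
        have : (x * δ * ξ) ^ 2 ≤ (x * y * ξ) ^ 2 := by
          calc (x * δ * ξ) ^ 2 = (x * ξ) ^ 2 * δ ^ 2 := by ring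
            _ ≤ (x * ξ) ^ 2 * y ^ 2 := by nlinarith [sq_nonneg (x * ξ)]
            _ = (x * y * ξ) ^ 2 := by ring
        linarith
      have h2 : |x / y| ≤ x / δ := by
        rw [abs_of_nonneg (by positivity)]
        exact div_le_div_of_nonneg_left hx0.le hδ0 hyδ
      calc ‖a (x * y * ξ)‖ * |x / y| * ‖u y‖
          ≤ ((C₀ + C₂) / (1 + (x * δ * ξ) ^ 2)) * (x / δ) * ‖u y‖ := by
            gcongr
        _ = (C₀ + C₂) / (1 + (x * δ * ξ) ^ 2) * ((x / δ) * ‖u y‖) := by ring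
    · simp [image_eq_zero_of_notMem_tsupport hys]
  -- part (iv)
  have part4 : Integrable (fun ξ : ℝ => ∫ y in Set.Ioo (0 : ℝ) ε,
      ‖Complex.exp (Complex.I * ((x - y : ℝ) : ℂ) * (ξ : ℂ))
        * a (x * y * ξ) * ((x / y : ℝ) : ℂ) * u y‖) := by
    have hmeas : AEStronglyMeasurable (fun ξ : ℝ => ∫ y in Set.Ioo (0 : ℝ) ε,
        ‖Complex.exp (Complex.I * ((x - y : ℝ) : ℂ) * (ξ : ℂ))
          * a (x * y * ξ) * ((x / y : ℝ) : ℂ) * u y‖) volume := by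
      exact (hGc.norm.aestronglyMeasurable
        (μ := volume.prod (volume.restrict (Set.Ioo (0:ℝ) ε)))).integral_prod_right'
    have hxδ : x * δ ≠ 0 := by positivity
    have hBint : Integrable (fun ξ : ℝ => (C₀ + C₂) / (1 + (x * δ * ξ) ^ 2) * M) := by
      have h1 : Integrable (fun ξ : ℝ => (1 + (x * δ * ξ) ^ 2)⁻¹) :=
        integrable_inv_one_add_sq.comp_mul_left' hxδ
      have := (h1.const_mul (C₀ + C₂)).mul_const M
      simpa [div_eq_mul_inv, mul_comm, mul_assoc, mul_left_comm] using this
    refine hBint.mono' hmeas ?_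
    filter_upwards with ξ
    rw [Real.norm_of_nonneg (integral_nonneg (fun _ => norm_nonneg _))]
    have hint1 : IntegrableOn (fun y : ℝ =>
        (C₀ + C₂) / (1 + (x * δ * ξ) ^ 2) * ((x / δ) * ‖u y‖)) (Set.Ioo (0:ℝ) ε) :=
      ((hUint.norm.const_mul _).const_mul _).integrableOn
    calc (∫ y in Set.Ioo (0 : ℝ) ε,
        ‖Complex.exp (Complex.I * ((x - y : ℝ) : ℂ) * (ξ : ℂ))
          * a (x * y * ξ) * ((x / y : ℝ) : ℂ) * u y‖)
        ≤ ∫ y in Set.Ioo (0 : ℝ) ε,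
            (C₀ + C₂) / (1 + (x * δ * ξ) ^ 2) * ((x / δ) * ‖u y‖) := by
          refine setIntegral_mono_on (part3 ξ).norm hint1 measurableSet_Ioo ?_
          exact hptG ξ
      _ = (C₀ + C₂) / (1 + (x * δ * ξ) ^ 2) * M := by
          rw [integral_const_mul, integral_const_mul, hM]
  -- part (v): Fubini + change of variables
  have hFprod : Integrable (Function.uncurry (fun ξ y : ℝ =>
      Complex.exp (Complex.I * ((1 / y - 1 / x : ℝ) : ℂ) * (ξ : ℂ))
        * a ξ * u y / ((y : ℂ) ^ 2))) (volume.prod (volume.restrict (Set.Ioo (0:ℝ) ε))) := by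
    exact (integrable_prod_iff (hFc.aestronglyMeasurable)).2
      ⟨Filter.Eventually.of_forall part1, part2⟩
  have hGprod : Integrable (Function.uncurry (fun ξ y : ℝ =>
      Complex.exp (Complex.I * ((x - y : ℝ) : ℂ) * (ξ : ℂ))
        * a (x * y * ξ) * ((x / y : ℝ) : ℂ) * u y))
      (volume.prod (volume.restrict (Set.Ioo (0:ℝ) ε))) := by
    exact (integrable_prod_iff (hGc.aestronglyMeasurable)).2
      ⟨Filter.Eventually.of_forall part3, part4⟩
  refine ⟨part1, part2, part3, part4, ?_⟩
  calc (∫ ξ : ℝ, ∫ y in Set.Ioo (0 : ℝ) ε,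
        Complex.exp (Complex.I * ((1 / y - 1 / x : ℝ) : ℂ) * (ξ : ℂ)) * a ξ * u y / ((y : ℂ) ^ 2))
      = ∫ y in Set.Ioo (0 : ℝ) ε, ∫ ξ : ℝ,
        Complex.exp (Complex.I * ((1 / y - 1 / x : ℝ) : ℂ) * (ξ : ℂ)) * a ξ * u y / ((y : ℂ) ^ 2) :=
        integral_integral_swap hFprod
    _ = ∫ y in Set.Ioo (0 : ℝ) ε, ∫ ξ : ℝ,
        Complex.exp (Complex.I * ((x - y : ℝ) : ℂ) * (ξ : ℂ))
          * a (x * y * ξ) * ((x / y : ℝ) : ℂ) * u y := by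
        refine setIntegral_congr_fun measurableSet_Ioo ?_
        intro y hy
        have hy0 : 0 < y := hy.1
        have hxy : (0:ℝ) < x * y := by positivity
        set F₀ : ℝ → ℂ := fun t =>
          Complex.exp (Complex.I * ((1 / y - 1 / x : ℝ) : ℂ) * (t : ℂ)) * a t * u y / ((y : ℂ) ^ 2)
          with hF₀
        have h1 : ∀ ξ : ℝ, Complex.exp (Complex.I * ((x - y : ℝ) : ℂ) * (ξ : ℂ))
            * a (x * y * ξ) * ((x / y : ℝ) : ℂ) * u y = ((x * y : ℝ) : ℂ) * F₀ (x * y * ξ) := by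
          intro ξ
          rw [hF₀]
          have hxC : (x : ℂ) ≠ 0 := Complex.ofReal_ne_zero.mpr hx0.ne'
          have hyC : (y : ℂ) ≠ 0 := Complex.ofReal_ne_zero.mpr hy0.ne'
          have hexp : Complex.I * ((1 / y - 1 / x : ℝ) : ℂ) * ((x * y * ξ : ℝ) : ℂ)
              = Complex.I * ((x - y : ℝ) : ℂ) * (ξ : ℂ) := by
            push_cast
            field_simp
          simp only [hexp]
          push_cast
          field_simp
        have h2 : (∫ ξ : ℝ, Complex.exp (Complex.I * ((x - y : ℝ) : ℂ) * (ξ : ℂ))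
            * a (x * y * ξ) * ((x / y : ℝ) : ℂ) * u y) = ∫ t : ℝ, F₀ t := by
          simp_rw [h1]
          rw [integral_const_mul, Measure.integral_comp_mul_left F₀ (x * y),
            abs_of_pos (inv_pos.mpr hxy), Complex.real_smul]
          rw [← mul_assoc, ← Complex.ofReal_mul, mul_inv_cancel₀ hxy.ne',
            Complex.ofReal_one, one_mul]
        exact h2.symm
    _ = ∫ ξ : ℝ, ∫ y in Set.Ioo (0 : ℝ) ε,
        Complex.exp (Complex.I * ((x - y : ℝ) : ℂ) * (ξ : ℂ))
          * a (x * y * ξ) * ((x / y : ℝ) : ℂ) * u y := (integral_integral_swap hGprod).symm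
end

section
/- Let p(z) = Σ_{j=0}^m a_j z^j be a polynomial with complex coefficients such that a_m ≠ 0 and p(ξ) ≠ 0 for every ξ ∈ ℝ; write p(D)u = Σ_{j=0}^m a_j (-i)^j u^{(j)} (D = -i d/dx). Then p(D) maps 𝒮(ℝ) into 𝒮(ℝ) and is a linear bijection of 𝒮(ℝ) onto itself; in particular, for every f ∈ 𝒮(ℝ) there is a unique u ∈ 𝒮(ℝ) with Σ_{j=0}^m a_j (-i)^j u^{(j)}(x) = f(x) for all x ∈ ℝ. -/
/-!
Under the Fourier transform (kernel `e^{-2πixξ}`), `d/dx` becomes multiplication by `2πiξ`, so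
`p(D)` is the Fourier multiplier with symbol `σ(ξ) = p(2πξ)`. A polynomial without real zeros is
either a nonzero constant or tends to infinity, so `|σ| ≥ c > 0` on `ℝ`; then `1/σ` has temperate
growth like `σ`, and the Fourier multiplier with symbol `1/σ` inverts `p(D)` on `𝒮(ℝ)`.
-/

open Polynomial Complex Real SchwartzMap LineDeriv Filter
open scoped Nat ContDiff FourierTransform

theorem Polynomial.exists_pos_le_norm_eval_ofReal (p : ℂ[X]) (hp : ∀ x : ℝ, p.eval (x : ℂ) ≠ 0) :
    ∃ c > 0, ∀ x : ℝ, c ≤ ‖p.eval (x : ℂ)‖ := by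
  by_cases hdeg : 0 < p.degree
  · have hcont : Continuous fun x : ℝ ↦ ‖p.eval (x : ℂ)‖ := by fun_prop
    have htendsto : Tendsto (fun x : ℝ ↦ ‖p.eval (x : ℂ)‖) (cocompact ℝ) atTop :=
      p.tendsto_norm_atTop hdeg <| by
        simpa only [norm_real] using tendsto_norm_cocompact_atTop (E := ℝ)
    obtain ⟨x₀, hx₀⟩ := hcont.exists_forall_le htendsto
    exact ⟨_, norm_pos_iff.2 (hp x₀), hx₀⟩
  · rw [eq_C_of_degree_le_zero (not_lt.1 hdeg)] at hp ⊢
    exact ⟨_, norm_pos_iff.2 (by simpa using hp 0), fun x ↦ by simp⟩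

theorem norm_iteratedFDeriv_real_inv {𝕜 : Type*} [RCLike 𝕜] (n : ℕ) {z : 𝕜} (hz : z ≠ 0) :
    ‖iteratedFDeriv ℝ n Inv.inv z‖ = n ! * ‖z‖⁻¹ ^ (n + 1) := by
  have hinv : ContDiffAt 𝕜 n Inv.inv z := contDiffAt_inv 𝕜 hz
  rw [← hinv.restrictScalars_iteratedFDeriv (𝕜 := ℝ), Function.comp_apply,
    ContinuousMultilinearMap.norm_restrictScalars, norm_iteratedFDeriv_eq_norm_iteratedDeriv,
    iteratedDeriv_eq_iterate, iter_deriv_inv]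
  simp only [norm_mul, norm_pow, norm_neg, norm_one, one_pow, one_mul, RCLike.norm_natCast,
    norm_zpow, inv_pow]
  rw [← zpow_natCast, ← zpow_neg]
  push_cast
  ring_nf

theorem Function.HasTemperateGrowth.inv {𝕜 E : Type*} [RCLike 𝕜] [NormedAddCommGroup E]
    [NormedSpace ℝ E] {f : E → 𝕜} (hf : f.HasTemperateGrowth) {c : ℝ} (hc : 0 < c)
    (hfc : ∀ x, c ≤ ‖f x‖) : (fun x ↦ (f x)⁻¹).HasTemperateGrowth := by
  set t : Set 𝕜 := {z | c / 2 < ‖z‖}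
  have ht : IsOpen t := isOpen_lt continuous_const continuous_norm
  have ht0 : ∀ z ∈ t, z ≠ 0 := fun z hz h ↦ by
    simp only [t, Set.mem_ofPred_eq, h, norm_zero] at hz; linarith
  refine hf.comp' (g := Inv.inv) (t := t) ?_ ht.uniqueDiffOn
    (fun z hz ↦ ((contDiffAt_inv 𝕜 (n := ∞) (ht0 z hz)).restrict_scalars ℝ).contDiffWithinAt) ?_
  · rintro - ⟨x, rfl⟩
    exact (half_lt_self hc).trans_le (hfc x)
  · intro N
    refine ⟨0, N ! * (2 / c + 1) ^ (N + 1), by positivity, fun n hn z hz ↦ ?_⟩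
    have hz_inv : ‖z‖⁻¹ ≤ 2 / c + 1 := by
      have : ‖z‖⁻¹ < (c / 2)⁻¹ := inv_strictAnti₀ (by positivity) hz
      rw [inv_div] at this
      linarith
    rw [iteratedFDerivWithin_of_isOpen n ht hz, norm_iteratedFDeriv_real_inv n (ht0 z hz),
      pow_zero, mul_one]
    gcongr ?_ * ?_
    · exact_mod_cast Nat.factorial_le hn
    · calc ‖z‖⁻¹ ^ (n + 1) ≤ (2 / c + 1) ^ (n + 1) := by gcongr
        _ ≤ (2 / c + 1) ^ (N + 1) := pow_le_pow_right₀ (by linarith [div_pos two_pos hc]) (by omega)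

section FourierMultiplier

variable {𝕜 E F : Type*} [RCLike 𝕜] [NormedAddCommGroup E] [InnerProductSpace ℝ E]
  [FiniteDimensional ℝ E] [MeasurableSpace E] [BorelSpace E]
  [NormedAddCommGroup F] [NormedSpace ℂ F] [NormedSpace 𝕜 F] [SMulCommClass ℂ 𝕜 F]
  [CompleteSpace F]

theorem SchwartzMap.fourierMultiplierCLM_bijective {g : E → 𝕜} (hg : g.HasTemperateGrowth)
    {c : ℝ} (hc : 0 < c) (hgc : ∀ x, c ≤ ‖g x‖) :
    Function.Bijective (fourierMultiplierCLM F g) := by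
  have hg0 : ∀ x, g x ≠ 0 := fun x h ↦ by linarith [hgc x, norm_eq_zero.2 h]
  have hginv := hg.inv hc hgc
  refine Function.bijective_iff_has_inverse.2 ⟨fourierMultiplierCLM F (fun x ↦ (g x)⁻¹), ?_, ?_⟩
  · intro u
    have : (fun x ↦ (g x)⁻¹) * g = fun _ ↦ 1 := funext fun x ↦ inv_mul_cancel₀ (hg0 x)
    simp [fourierMultiplierCLM_fourierMultiplierCLM_apply hginv hg, this]
  · intro u
    have : g * (fun x ↦ (g x)⁻¹) = fun _ ↦ 1 := funext fun x ↦ mul_inv_cancel₀ (hg0 x)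
    simp [fourierMultiplierCLM_fourierMultiplierCLM_apply hg hginv, this]

end FourierMultiplier

section Derivative

variable {F : Type*} [NormedAddCommGroup F] [NormedSpace ℂ F]

theorem SchwartzMap.iteratedLineDerivOp_one_apply (n : ℕ) (f : 𝓢(ℝ, F)) (x : ℝ) :
    ∂^{fun _ : Fin n ↦ (1 : ℝ)} f x = iteratedDeriv n f x := by
  rw [iteratedLineDerivOp_eq_iteratedFDeriv, iteratedDeriv_eq_iteratedFDeriv]

variable [CompleteSpace F]

theorem SchwartzMap.lineDerivOp_one_eq_fourierMultiplierCLM (f : 𝓢(ℝ, F)) :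
    ∂_{(1 : ℝ)} f = fourierMultiplierCLM F (fun ξ : ℝ ↦ 2 * π * I * ξ) f := by
  have h : (fun ξ : ℝ ↦ (2 * π * I * ξ : ℂ)) = (2 * π * I) • fun ξ : ℝ ↦ ((ξ : ℝ) : ℂ) := by
    ext ξ; simp
  rw [SchwartzMap.lineDeriv_eq_fourierMultiplierCLM, h, fourierMultiplierCLM_smul (by fun_prop),
    ← fourierMultiplierCLM_ofReal ℂ (by fun_prop)]
  simp

theorem SchwartzMap.iteratedLineDerivOp_one_eq_fourierMultiplierCLM (n : ℕ) (f : 𝓢(ℝ, F)) :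
    ∂^{fun _ : Fin n ↦ (1 : ℝ)} f = fourierMultiplierCLM F (fun ξ : ℝ ↦ (2 * π * I * ξ) ^ n) f := by
  induction n with
  | zero => simp
  | succ n ih =>
    change ∂_{(1 : ℝ)} (∂^{fun _ : Fin n ↦ (1 : ℝ)} f) = _
    rw [ih, lineDerivOp_one_eq_fourierMultiplierCLM,
      fourierMultiplierCLM_fourierMultiplierCLM_apply (by fun_prop) (by fun_prop)]
    congr 2
    ext ξ
    simp [pow_succ']

theorem SchwartzMap.fourierMultiplierCLM_sum_mul_pow_apply (s : Finset ℕ) (c : ℕ → ℂ)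
    (f : 𝓢(ℝ, F)) (x : ℝ) :
    fourierMultiplierCLM F (fun ξ : ℝ ↦ ∑ j ∈ s, c j * (2 * π * I * ξ) ^ j) f x =
      ∑ j ∈ s, c j • iteratedDeriv j f x := by
  rw [fourierMultiplierCLM_sum F (fun j _ ↦ by fun_prop), sum_apply, sum_apply]
  refine Finset.sum_congr rfl fun j _ ↦ ?_
  rw [show (fun ξ : ℝ ↦ c j * (2 * π * I * ξ) ^ j) = c j • fun ξ : ℝ ↦ (2 * π * I * ξ) ^ j from rfl,
    fourierMultiplierCLM_smul (by fun_prop), smul_apply,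
    ← iteratedLineDerivOp_one_eq_fourierMultiplierCLM, smul_apply,
    iteratedLineDerivOp_one_apply]

end Derivative

theorem elliptic_constant_coeff_bijective_on_schwartz_general (m : ℕ) (a : ℕ → ℂ)
    (hp : ∀ ξ : ℝ, (∑ j ∈ Finset.range (m + 1), a j * (ξ : ℂ) ^ j) ≠ 0) :
    (∀ u : SchwartzMap ℝ ℂ, ∃ v : SchwartzMap ℝ ℂ, ∀ x : ℝ,
        v x = ∑ j ∈ Finset.range (m + 1), a j * (-Complex.I) ^ j * iteratedDeriv j (⇑u) x) ∧
    (∀ f : SchwartzMap ℝ ℂ, ∃! u : SchwartzMap ℝ ℂ, ∀ x : ℝ,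
        (∑ j ∈ Finset.range (m + 1), a j * (-Complex.I) ^ j * iteratedDeriv j (⇑u) x) = f x) := by
  set σ : ℝ → ℂ := fun ξ ↦ ∑ j ∈ Finset.range (m + 1), a j * (-I) ^ j * (2 * π * I * ξ) ^ j
  have hL : ∀ (u : 𝓢(ℝ, ℂ)) x, fourierMultiplierCLM ℂ σ u x =
      ∑ j ∈ Finset.range (m + 1), a j * (-I) ^ j * iteratedDeriv j u x :=
    fourierMultiplierCLM_sum_mul_pow_apply _ _
  set p : ℂ[X] := ∑ j ∈ Finset.range (m + 1), C (a j) * X ^ j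
  have hp_eval : ∀ z, p.eval z = ∑ j ∈ Finset.range (m + 1), a j * z ^ j := fun z ↦ by
    simp [p, eval_finsetSum]
  have hσ : ∀ ξ : ℝ, σ ξ = p.eval ((2 * π * ξ : ℝ) : ℂ) := by
    intro ξ
    simp only [σ, hp_eval, mul_assoc, ← mul_pow]
    push_cast
    congr! 3
    linear_combination (-2 * π * ξ) * I_mul_I
  obtain ⟨c, hc, hcσ⟩ := exists_pos_le_norm_eval_ofReal p (by simpa [hp_eval] using hp)
  have hbij := fourierMultiplierCLM_bijective (F := ℂ) (by fun_prop) hc fun ξ ↦ hσ ξ ▸ hcσ _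
  refine ⟨fun u ↦ ⟨_, fun x ↦ hL u x⟩, fun f ↦ ?_⟩
  simp_rw [← hL, ← SchwartzMap.ext_iff]
  exact hbij.existsUnique f

/-- If `p(z) = Σ_{j≤m} a_j z^j` has `a_m ≠ 0` and no real zeros, then
`p(D) = Σ_j a_j (-i)^j (d/dx)^j` maps `𝒮(ℝ)` into itself and is a linear bijection of
`𝒮(ℝ)` onto itself; in particular every `f ∈ 𝒮(ℝ)` has a unique Schwartz solution `u` of
`p(D)u = f`. -/
theorem elliptic_constant_coeff_bijective_on_schwartz (m : ℕ) (a : ℕ → ℂ) (ham : a m ≠ 0)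
    (hp : ∀ ξ : ℝ, (∑ j ∈ Finset.range (m + 1), a j * (ξ : ℂ) ^ j) ≠ 0) :
    (∀ u : SchwartzMap ℝ ℂ, ∃ v : SchwartzMap ℝ ℂ, ∀ x : ℝ,
        v x = ∑ j ∈ Finset.range (m + 1), a j * (-Complex.I) ^ j * iteratedDeriv j (⇑u) x) ∧
    (∀ f : SchwartzMap ℝ ℂ, ∃! u : SchwartzMap ℝ ℂ, ∀ x : ℝ,
        (∑ j ∈ Finset.range (m + 1), a j * (-Complex.I) ^ j * iteratedDeriv j (⇑u) x) = f x) :=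
  elliptic_constant_coeff_bijective_on_schwartz_general m a hp
end
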